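/- arXiv:2208.11181 — 3 statements merged into one kernel-verified Lean document; each statement's English description precedes it below -/
import Mathlib

section
/- Let ε ∈ (0, 1/2], let G be an ε-Ramsey-balanced graph, and let H be obtained from G by deleting one vertex. Then r(G) ≤ (4/ε)·r(H). -/
open Finset

/-- A two-coloring `col` of the edges of `K_N` contains a monochromatic copy of `G` in color `c`. -/
def HasMonoCopy {V : Type*} {N : ℕ} (G : SimpleGraph V) (col : Sym2 (Fin N) → Bool)
    (c : Bool) : Prop :=
  ∃ f : V → Fin N, Function.Injective f ∧ ∀ u v : V, G.Adj u v → col s(f u, f v) = c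

/-- The two-color Ramsey number of a graph `G`. -/
noncomputable def ramsey {V : Type*} (G : SimpleGraph V) : ℕ :=
  sInf {N | ∀ col : Sym2 (Fin N) → Bool, ∃ c : Bool, HasMonoCopy G col c}

/-- `q`-coloring version of containing a monochromatic copy. -/
def HasMonoCopyMulti {V : Type*} {N q : ℕ} (G : SimpleGraph V) (col : Sym2 (Fin N) → Fin q)
    (c : Fin q) : Prop :=
  ∃ f : V → Fin N, Function.Injective f ∧ ∀ u v : V, G.Adj u v → col s(f u, f v) = c

/-- The `q`-color Ramsey number of a graph `G`. -/
noncomputable def ramseyMulti {V : Type*} (G : SimpleGraph V) (q : ℕ) : ℕ :=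
  sInf {N | ∀ col : Sym2 (Fin N) → Fin q, ∃ c : Fin q, HasMonoCopyMulti G col c}

/-- The `n`-vertex graph consisting of a clique `K_k` together with `n - k` isolated vertices. -/
def Hgraph (k n : ℕ) : SimpleGraph (Fin n) where
  Adj u v := u ≠ v ∧ (u : ℕ) < k ∧ (v : ℕ) < k
  symm := ⟨by rintro u v ⟨h1, h2, h3⟩; exact ⟨h1.symm, h3, h2⟩⟩
  loopless := ⟨by rintro u ⟨h, -⟩; exact h rfl⟩

/-- The `(n+1)`-vertex graph obtained from `Hgraph k n` by adding an apex vertex (the vertex `n`)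
adjacent to all other vertices. -/
def Ggraph (k n : ℕ) : SimpleGraph (Fin (n + 1)) where
  Adj u v := u ≠ v ∧ ((u : ℕ) = n ∨ (v : ℕ) = n ∨ ((u : ℕ) < k ∧ (v : ℕ) < k))
  symm := ⟨by rintro u v ⟨h1, h2⟩; exact ⟨h1.symm, by tauto⟩⟩
  loopless := ⟨by rintro u ⟨h, -⟩; exact h rfl⟩

/-- The disjoint union of `n / k` copies of `K_k` (blocks of `k` consecutive vertices). -/
def Hgraph' (k n : ℕ) : SimpleGraph (Fin n) where
  Adj u v := u ≠ v ∧ (u : ℕ) / k = (v : ℕ) / k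
  symm := ⟨by rintro u v ⟨h1, h2⟩; exact ⟨h1.symm, h2.symm⟩⟩
  loopless := ⟨by rintro u ⟨h, -⟩; exact h rfl⟩

/-- `G` is `d`-degenerate: every nonempty set of vertices contains a vertex with at most `d`
neighbors inside the set. -/
def Degenerate {V : Type*} (G : SimpleGraph V) (d : ℕ) : Prop :=
  ∀ s : Set V, s.Nonempty → ∃ v ∈ s, {u ∈ s | G.Adj v u}.ncard ≤ d

/-- The degeneracy of `G`: the least `d` such that `G` is `d`-degenerate. -/
noncomputable def degeneracy {V : Type*} (G : SimpleGraph V) : ℕ :=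
  sInf {d | Degenerate G d}

/-- The number of edges of `K_N` receiving color `c` under the coloring `col`. -/
noncomputable def colorEdgeCount {N : ℕ} (col : Sym2 (Fin N) → Bool) (c : Bool) : ℕ :=
  {e : Sym2 (Fin N) | ¬ e.IsDiag ∧ col e = c}.ncard

/-- The set of vertices joined to `v` by an edge of color `c`. -/
def colorNbr {N : ℕ} (col : Sym2 (Fin N) → Bool) (c : Bool) (v : Fin N) : Finset (Fin N) :=
  Finset.univ.filter fun u => u ≠ v ∧ col s(v, u) = c

/-- Monochromatic clique predicate. -/
def MonoOn {N : ℕ} (col : Sym2 (Fin N) → Bool) (c : Bool) (S : Finset (Fin N)) : Prop :=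
  ∀ u ∈ S, ∀ w ∈ S, u ≠ w → col s(u, w) = c

lemma mem_colorNbr {N : ℕ} {col : Sym2 (Fin N) → Bool} {c : Bool} {v u : Fin N} :
    u ∈ colorNbr col c v ↔ u ≠ v ∧ col s(v, u) = c := by
  simp [colorNbr]

lemma not_mem_colorNbr_self {N : ℕ} (col : Sym2 (Fin N) → Bool) (c : Bool) (v : Fin N) :
    v ∉ colorNbr col c v := by simp [colorNbr]

lemma monoOn_map {N M : ℕ} (φ : Fin M ↪ Fin N) (col : Sym2 (Fin N) → Bool) (c : Bool)
    (S : Finset (Fin M)) (h : MonoOn (fun e => col (e.map φ)) c S) :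
    MonoOn col c (S.map φ) := by
  intro u hu w hw hne
  obtain ⟨a, ha, rfl⟩ := Finset.mem_map.1 hu
  obtain ⟨b, hb, rfl⟩ := Finset.mem_map.1 hw
  have hab : a ≠ b := fun h' => hne (by rw [h'])
  have := h a ha b hb hab
  simpa [Sym2.map_pair_eq] using this

lemma monoOn_insert {N : ℕ} {col : Sym2 (Fin N) → Bool} {c : Bool} {v : Fin N}
    {S : Finset (Fin N)} (hS : S ⊆ colorNbr col c v) (h : MonoOn col c S) :
    MonoOn col c (insert v S) := by
  intro u hu w hw hne
  rcases Finset.mem_insert.1 hu with rfl | hu'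
  · rcases Finset.mem_insert.1 hw with rfl | hw'
    · exact absurd rfl hne
    · exact (mem_colorNbr.1 (hS hw')).2
  · rcases Finset.mem_insert.1 hw with rfl | hw'
    · rw [Sym2.eq_swap]; exact (mem_colorNbr.1 (hS hu')).2
    · exact h u hu' w hw' hne

/-- Finite Ramsey theorem for two colors. -/
lemma ramsey_two (s t : ℕ) : ∃ N : ℕ, ∀ col : Sym2 (Fin N) → Bool,
    (∃ S : Finset (Fin N), S.card = s ∧ MonoOn col true S) ∨
    (∃ S : Finset (Fin N), S.card = t ∧ MonoOn col false S) := by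
  suffices h : ∀ k s t : ℕ, s + t ≤ k → ∃ N : ℕ, ∀ col : Sym2 (Fin N) → Bool,
      (∃ S : Finset (Fin N), S.card = s ∧ MonoOn col true S) ∨
      (∃ S : Finset (Fin N), S.card = t ∧ MonoOn col false S) from h (s+t) s t le_rfl
  intro k
  induction k with
  | zero =>
    intro s t hst
    obtain ⟨rfl, rfl⟩ : s = 0 ∧ t = 0 := by omega
    exact ⟨0, fun col => Or.inl ⟨∅, by simp, by intro u hu; simp at hu⟩⟩
  | succ k ih =>
    intro s t hst
    match s, t with
    | 0, t => exact ⟨0, fun col => Or.inl ⟨∅, by simp, by intro u hu; simp at hu⟩⟩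
    | s+1, 0 => exact ⟨0, fun col => Or.inr ⟨∅, by simp, by intro u hu; simp at hu⟩⟩
    | s+1, t+1 =>
      obtain ⟨N₁, h₁⟩ := ih s (t+1) (by omega)
      obtain ⟨N₂, h₂⟩ := ih (s+1) t (by omega)
      refine ⟨N₁ + N₂ + 1, fun col => ?_⟩
      set v : Fin (N₁ + N₂ + 1) := ⟨N₁ + N₂, by omega⟩ with hv
      have hunion : colorNbr col true v ∪ colorNbr col false v = Finset.univ.erase v := by
        ext u
        simp only [Finset.mem_union, mem_colorNbr, Finset.mem_erase, Finset.mem_univ, and_true]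
        rcases Bool.eq_false_or_eq_true (col s(v, u)) with h | h <;> simp [h] <;> tauto
      have hdisj : Disjoint (colorNbr col true v) (colorNbr col false v) := by
        rw [Finset.disjoint_left]
        intro a ha hb
        have h1 := (mem_colorNbr.1 ha).2
        have h2 := (mem_colorNbr.1 hb).2
        rw [h1] at h2; exact Bool.noConfusion h2
      have hcard : (colorNbr col true v).card + (colorNbr col false v).card = N₁ + N₂ := by
        rw [← Finset.card_union_of_disjoint hdisj, hunion, Finset.card_erase_of_mem (Finset.mem_univ v)]
        simp
      have hcases : N₁ ≤ (colorNbr col true v).card ∨ N₂ ≤ (colorNbr col false v).card := by omega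
      rcases hcases with hA | hB
      · obtain ⟨T, hTsub, hTcard⟩ := Finset.exists_subset_card_eq hA
        set φ := (T.orderEmbOfFin hTcard).toEmbedding with hφ
        have hφmem : ∀ i, φ i ∈ T := fun i => T.orderEmbOfFin_mem hTcard i
        rcases h₁ (fun e => col (e.map φ)) with ⟨S, hScard, hSmono⟩ | ⟨S, hScard, hSmono⟩
        · left
          have hmap : MonoOn col true (S.map φ) := monoOn_map φ col true S hSmono
          have hsub : S.map φ ⊆ colorNbr col true v := by
            intro a ha
            obtain ⟨b, hb, rfl⟩ := Finset.mem_map.1 ha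
            exact hTsub (hφmem b)
          have hvnot : v ∉ S.map φ := fun h => not_mem_colorNbr_self col true v (hsub h)
          refine ⟨insert v (S.map φ), ?_, monoOn_insert hsub hmap⟩
          rw [Finset.card_insert_of_notMem hvnot, Finset.card_map, hScard]
        · right
          refine ⟨S.map φ, by rw [Finset.card_map, hScard], monoOn_map φ col false S hSmono⟩
      · obtain ⟨T, hTsub, hTcard⟩ := Finset.exists_subset_card_eq hB
        set φ := (T.orderEmbOfFin hTcard).toEmbedding with hφ
        have hφmem : ∀ i, φ i ∈ T := fun i => T.orderEmbOfFin_mem hTcard i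
        rcases h₂ (fun e => col (e.map φ)) with ⟨S, hScard, hSmono⟩ | ⟨S, hScard, hSmono⟩
        · left
          refine ⟨S.map φ, by rw [Finset.card_map, hScard], monoOn_map φ col true S hSmono⟩
        · right
          have hmap : MonoOn col false (S.map φ) := monoOn_map φ col false S hSmono
          have hsub : S.map φ ⊆ colorNbr col false v := by
            intro a ha
            obtain ⟨b, hb, rfl⟩ := Finset.mem_map.1 ha
            exact hTsub (hφmem b)
          have hvnot : v ∉ S.map φ := fun h => not_mem_colorNbr_self col false v (hsub h)
          refine ⟨insert v (S.map φ), ?_, monoOn_insert hsub hmap⟩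
          rw [Finset.card_insert_of_notMem hvnot, Finset.card_map, hScard]

lemma ramsey_set_nonempty {W : Type*} [Fintype W] (G' : SimpleGraph W) :
    {N | ∀ col : Sym2 (Fin N) → Bool, ∃ c : Bool, HasMonoCopy G' col c}.Nonempty := by
  obtain ⟨N, hN⟩ := ramsey_two (Fintype.card W) (Fintype.card W)
  refine ⟨N, fun col => ?_⟩
  have : ∃ (c : Bool) (S : Finset (Fin N)), S.card = Fintype.card W ∧ MonoOn col c S := by
    rcases hN col with ⟨S, h1, h2⟩ | ⟨S, h1, h2⟩
    exacts [⟨true, S, h1, h2⟩, ⟨false, S, h1, h2⟩]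
  obtain ⟨c, S, hcard, hmono⟩ := this
  refine ⟨c, fun u => (S.orderEmbOfFin hcard) ((Fintype.equivFin W) u), ?_, ?_⟩
  · exact fun a b hab => (Fintype.equivFin W).injective
      ((S.orderEmbOfFin hcard).injective hab)
  · intro u w hadj
    have hne : (Fintype.equivFin W) u ≠ (Fintype.equivFin W) w := by
      simp [hadj.ne]
    exact hmono _ (S.orderEmbOfFin_mem hcard _) _ (S.orderEmbOfFin_mem hcard _)
      (fun h => hne ((S.orderEmbOfFin hcard).injective h))


lemma colorEdgeCount_eq {N : ℕ} (col : Sym2 (Fin N) → Bool) (c : Bool) :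
    colorEdgeCount col c
      = (Finset.univ.filter fun e : Sym2 (Fin N) => ¬ e.IsDiag ∧ col e = c).card := by
  rw [colorEdgeCount, ← Set.ncard_coe_finset]
  congr 1
  ext e
  simp

lemma sum_colorNbr {N : ℕ} (col : Sym2 (Fin N) → Bool) (c : Bool) :
    ∑ v : Fin N, (colorNbr col c v).card = 2 * colorEdgeCount col c := by
  classical
  set P : Finset (Fin N × Fin N) :=
    Finset.univ.filter fun p : Fin N × Fin N => p.2 ≠ p.1 ∧ col s(p.1, p.2) = c with hPdef
  have hP : P = Finset.univ.biUnion (fun v => ({v} : Finset (Fin N)) ×ˢ colorNbr col c v) := by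
    ext ⟨a, b⟩
    simp [hPdef, colorNbr]
  have step1 : ∑ v : Fin N, (colorNbr col c v).card = P.card := by
    rw [hP, Finset.card_biUnion]
    · apply Finset.sum_congr rfl
      intro v _
      simp
    · intro v _ w _ hvw
      rw [Function.onFun, Finset.disjoint_left]
      intro p hp hq
      simp only [Finset.mem_product, Finset.mem_singleton] at hp hq
      exact hvw (hp.1 ▸ hq.1 ▸ rfl)
  set Ec : Finset (Sym2 (Fin N)) :=
    Finset.univ.filter fun e : Sym2 (Fin N) => ¬ e.IsDiag ∧ col e = c with hEc
  have step2 : P.card = 2 * Ec.card := by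
    have hfib : ∀ p ∈ P, s(p.1, p.2) ∈ Ec := by
      intro p hp
      simp only [hPdef, Finset.mem_filter, Finset.mem_univ, true_and] at hp
      simp only [hEc, Finset.mem_filter, Finset.mem_univ, true_and]
      exact ⟨by simp [Sym2.mk_isDiag_iff]; exact fun h => hp.1 h.symm, hp.2⟩
    rw [Finset.card_eq_sum_card_fiberwise hfib]
    have hfib2 : ∀ e ∈ Ec, (P.filter fun p => s(p.1, p.2) = e).card = 2 := by
      intro e
      induction e using Sym2.ind with
      | _ x y =>
        intro he
        simp only [hEc, Finset.mem_filter, Finset.mem_univ, true_and] at he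
        have hxy : x ≠ y := by
          intro h; exact he.1 (by simp [h])
        have : (P.filter fun p => s(p.1, p.2) = s(x, y)) = {(x, y), (y, x)} := by
          ext ⟨a, b⟩
          simp only [Finset.mem_filter, hPdef, Finset.mem_univ, true_and,
            Finset.mem_insert, Finset.mem_singleton, Prod.mk.injEq]
          constructor
          · rintro ⟨-, habe⟩
            rcases Sym2.eq_iff.1 habe with ⟨rfl, rfl⟩ | ⟨rfl, rfl⟩
            · left; exact ⟨rfl, rfl⟩
            · right; exact ⟨rfl, rfl⟩
          · rintro (⟨rfl, rfl⟩ | ⟨rfl, rfl⟩)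
            · exact ⟨⟨fun h => hxy h.symm, he.2⟩, rfl⟩
            · refine ⟨⟨hxy, ?_⟩, Sym2.eq_swap⟩
              rw [Sym2.eq_swap]; exact he.2
        rw [this]
        rw [Finset.card_insert_of_notMem (by simp [Prod.ext_iff]; intro h; exact fun _ => hxy h), Finset.card_singleton]
    rw [Finset.sum_congr rfl hfib2, Finset.sum_const, smul_eq_mul, mul_comm]
  rw [step1, step2, colorEdgeCount_eq, hEc]


theorem ramsey_balanced_bound {V : Type*} [Fintype V] [Nontrivial V] (G : SimpleGraph V)
    (v : V) (ε : ℝ) (hε0 : 0 < ε) (hε : ε ≤ 1 / 2)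
    (hbal : ∃ col : Sym2 (Fin (ramsey G - 1)) → Bool,
      (∀ c : Bool, ¬ HasMonoCopy G col c) ∧
      (∀ c : Bool, ε * ((ramsey G - 1).choose 2) ≤ (colorEdgeCount col c : ℝ))) :
    (ramsey G : ℝ) ≤ (4 / ε) * ramsey (G.induce {u | u ≠ v}) := by
  classical
  set R := ramsey (G.induce {u | u ≠ v}) with hRdef
  have hne : {M | ∀ col : Sym2 (Fin M) → Bool,
      ∃ c : Bool, HasMonoCopy (G.induce {u | u ≠ v}) col c}.Nonempty :=
    ramsey_set_nonempty _
  have hRmem : ∀ col : Sym2 (Fin R) → Bool,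
      ∃ c : Bool, HasMonoCopy (G.induce {u | u ≠ v}) col c := Nat.sInf_mem hne
  have h8 : (8 : ℝ) ≤ 4 / ε := by
    rw [le_div_iff₀ hε0]; linarith
  have hR1 : 1 ≤ R := by
    rcases Nat.eq_zero_or_pos R with h0 | h; swap
    · exact h
    exfalso
    obtain ⟨u, hu⟩ := exists_ne v
    obtain ⟨c, f, -, -⟩ := hRmem (fun _ => true)
    exact absurd (f ⟨u, hu⟩).isLt (by omega)
  have hRcast : (1 : ℝ) ≤ (R : ℝ) := by exact_mod_cast hR1
  rcases Nat.lt_or_ge (ramsey G) 3 with hsmall | hbig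
  · have h2 : ((ramsey G : ℕ) : ℝ) ≤ 2 := by exact_mod_cast (by omega : ramsey G ≤ 2)
    nlinarith
  · set N := ramsey G - 1 with hN
    obtain ⟨col, hno, hbalc⟩ := hbal
    have hN2 : 2 ≤ N := by omega
    have hNR : (2 : ℝ) ≤ (N : ℝ) := by exact_mod_cast hN2
    -- Key: intersections of a red and a blue neighborhood are smaller than R
    have key : ∀ p q : Fin N, (colorNbr col true p ∩ colorNbr col false q).card < R := by
      intro p q
      by_contra hle
      push_neg at hle
      obtain ⟨T, hTsub, hTcard⟩ := Finset.exists_subset_card_eq hle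
      set φ := (T.orderEmbOfFin hTcard).toEmbedding with hφ
      have hTS : ∀ i, φ i ∈ colorNbr col true p ∩ colorNbr col false q :=
        fun i => hTsub (T.orderEmbOfFin_mem hTcard i)
      obtain ⟨c, f, hfinj, hf⟩ := hRmem (fun e => col (e.map φ))
      have build : ∀ z : Fin N, z ∉ (colorNbr col true p ∩ colorNbr col false q) →
          (∀ i : Fin R, col s(z, φ i) = c) → False := by
        intro z hz hcz
        apply hno c
        refine ⟨fun u => if h : u = v then z else φ (f ⟨u, h⟩), ?_, ?_⟩
        · intro a b hab
          have hab' : (if h : a = v then z else φ (f ⟨a, h⟩))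
              = (if h : b = v then z else φ (f ⟨b, h⟩)) := hab
          by_cases ha : a = v <;> by_cases hb : b = v
          · rw [ha, hb]
          · exfalso; rw [dif_pos ha, dif_neg hb] at hab'
            have := hTS (f ⟨b, hb⟩); rw [← hab'] at this; exact hz this
          · exfalso; rw [dif_neg ha, dif_pos hb] at hab'
            have := hTS (f ⟨a, ha⟩); rw [hab'] at this; exact hz this
          · rw [dif_neg ha, dif_neg hb] at hab'
            exact Subtype.mk_eq_mk.mp (hfinj (φ.injective hab'))
        · intro a b hadj
          by_cases ha : a = v <;> by_cases hb : b = v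
          · exfalso; rw [ha, hb] at hadj; exact G.loopless.irrefl v hadj
          · simp only [dif_pos ha, dif_neg hb]; exact hcz (f ⟨b, hb⟩)
          · simp only [dif_neg ha, dif_pos hb]; rw [Sym2.eq_swap]; exact hcz (f ⟨a, ha⟩)
          · simp only [dif_neg ha, dif_neg hb]
            have hadj' : (G.induce {u | u ≠ v}).Adj ⟨a, ha⟩ ⟨b, hb⟩ := hadj
            have := hf _ _ hadj'
            simpa [Sym2.map_pair_eq] using this
      cases c with
      | false =>
        exact build q
          (fun h => not_mem_colorNbr_self col false q (Finset.mem_inter.1 h).2)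
          (fun i => (mem_colorNbr.1 (Finset.mem_inter.1 (hTS i)).2).2)
      | true =>
        exact build p
          (fun h => not_mem_colorNbr_self col true p (Finset.mem_inter.1 h).1)
          (fun i => (mem_colorNbr.1 (Finset.mem_inter.1 (hTS i)).1).2)
    -- degree step
    have huniv : (Finset.univ : Finset (Fin N)).Nonempty := ⟨⟨0, by omega⟩, Finset.mem_univ _⟩
    have hdeg : ∀ c : Bool, ∃ p : Fin N, ε * ((N : ℝ) - 1) ≤ ((colorNbr col c p).card : ℝ) := by
      intro c
      by_contra hcon
      push_neg at hcon
      have hsum := sum_colorNbr col c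
      have hb := hbalc c
      have hchoose : ((N.choose 2 : ℕ) : ℝ) = (N : ℝ) * ((N : ℝ) - 1) / 2 :=
        Nat.cast_choose_two ℝ N
      have hcast : ((∑ p : Fin N, (colorNbr col c p).card : ℕ) : ℝ)
          = 2 * (colorEdgeCount col c : ℝ) := by exact_mod_cast congrArg Nat.cast hsum
      have hlt : ((∑ p : Fin N, (colorNbr col c p).card : ℕ) : ℝ)
          < (N : ℝ) * (ε * ((N : ℝ) - 1)) := by
        push_cast
        calc ∑ p : Fin N, ((colorNbr col c p).card : ℝ)
            < ∑ _p : Fin N, ε * ((N : ℝ) - 1) :=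
              Finset.sum_lt_sum_of_nonempty huniv (fun p _ => hcon p)
          _ = (N : ℝ) * (ε * ((N : ℝ) - 1)) := by
              rw [Finset.sum_const, Finset.card_univ, Fintype.card_fin, nsmul_eq_mul]
      rw [hchoose] at hb
      nlinarith
    obtain ⟨x, hx⟩ := hdeg true
    obtain ⟨y, hy⟩ := hdeg false
    set t := ε * ((N : ℝ) - 1) / 4 with htdef
    have ht : 0 < t := by
      apply div_pos (mul_pos hε0 (by linarith)) (by norm_num)
    have main : ∃ p q : Fin N,
        t ≤ ((colorNbr col true p ∩ colorNbr col false q).card : ℝ) := by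
      by_contra hcon
      push_neg at hcon
      set A := colorNbr col true x with hA
      set B := colorNbr col false y with hB
      set Pr := ((A \ B) ×ˢ (B \ A)).filter (fun p => col s(p.1, p.2) = true) with hPr
      set Pb := ((A \ B) ×ˢ (B \ A)).filter (fun p => ¬ col s(p.1, p.2) = true) with hPb
      have hsplit : Pr.card + Pb.card = (A \ B).card * (B \ A).card := by
        rw [hPr, hPb, Finset.card_filter_add_card_filter_not, Finset.card_product]
      have hPrsub : Pr ⊆ (A \ B).biUnion
          (fun a => ({a} : Finset (Fin N)) ×ˢ (colorNbr col true a ∩ B)) := by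
        rintro ⟨a, b⟩ hp
        simp only [hPr, Finset.mem_filter, Finset.mem_product, Finset.mem_sdiff] at hp
        obtain ⟨⟨⟨haA, haB⟩, hbB, hbA⟩, hcol⟩ := hp
        have hab : b ≠ a := fun h => haB (h ▸ hbB)
        refine Finset.mem_biUnion.2 ⟨a, Finset.mem_sdiff.2 ⟨haA, haB⟩, ?_⟩
        exact Finset.mem_product.2 ⟨Finset.mem_singleton_self a,
          Finset.mem_inter.2 ⟨mem_colorNbr.2 ⟨hab, hcol⟩, hbB⟩⟩
      have hPbsub : Pb ⊆ (B \ A).biUnion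
          (fun b => (A ∩ colorNbr col false b) ×ˢ ({b} : Finset (Fin N))) := by
        rintro ⟨a, b⟩ hp
        simp only [hPb, Finset.mem_filter, Finset.mem_product, Finset.mem_sdiff] at hp
        obtain ⟨⟨⟨haA, haB⟩, hbB, hbA⟩, hcol⟩ := hp
        have hcol' : col s(b, a) = false := by
          rw [Sym2.eq_swap]; exact Bool.not_eq_true _ |>.mp hcol
        have hab : a ≠ b := fun h => haB (h ▸ hbB)
        refine Finset.mem_biUnion.2 ⟨b, Finset.mem_sdiff.2 ⟨hbB, hbA⟩, ?_⟩
        exact Finset.mem_product.2 ⟨Finset.mem_inter.2 ⟨haA, mem_colorNbr.2 ⟨hab, hcol'⟩⟩,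
          Finset.mem_singleton_self b⟩
      have hPrcard : (Pr.card : ℝ) ≤ ((A \ B).card : ℝ) * t := by
        calc (Pr.card : ℝ)
            ≤ (((A \ B).biUnion
              (fun a => ({a} : Finset (Fin N)) ×ˢ (colorNbr col true a ∩ B))).card : ℝ) := by
              exact_mod_cast Finset.card_le_card hPrsub
          _ ≤ ((∑ a ∈ A \ B,
              (({a} : Finset (Fin N)) ×ˢ (colorNbr col true a ∩ B)).card : ℕ) : ℝ) := by
              exact_mod_cast Finset.card_biUnion_le
          _ = ∑ a ∈ A \ B, ((colorNbr col true a ∩ B).card : ℝ) := by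
              push_cast
              refine Finset.sum_congr rfl (fun a _ => ?_)
              rw [Finset.card_product, Finset.card_singleton, one_mul]
          _ ≤ ∑ _a ∈ A \ B, t := Finset.sum_le_sum (fun a _ => (hcon a y).le)
          _ = ((A \ B).card : ℝ) * t := by rw [Finset.sum_const, nsmul_eq_mul]
      have hPbcard : (Pb.card : ℝ) ≤ ((B \ A).card : ℝ) * t := by
        calc (Pb.card : ℝ)
            ≤ (((B \ A).biUnion
              (fun b => (A ∩ colorNbr col false b) ×ˢ ({b} : Finset (Fin N)))).card : ℝ) := by
              exact_mod_cast Finset.card_le_card hPbsub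
          _ ≤ ((∑ b ∈ B \ A,
              ((A ∩ colorNbr col false b) ×ˢ ({b} : Finset (Fin N))).card : ℕ) : ℝ) := by
              exact_mod_cast Finset.card_biUnion_le
          _ = ∑ b ∈ B \ A, ((A ∩ colorNbr col false b).card : ℝ) := by
              push_cast
              refine Finset.sum_congr rfl (fun b _ => ?_)
              rw [Finset.card_product, Finset.card_singleton, mul_one]
          _ ≤ ∑ _b ∈ B \ A, t := Finset.sum_le_sum (fun b _ => (hcon x b).le)
          _ = ((B \ A).card : ℝ) * t := by rw [Finset.sum_const, nsmul_eq_mul]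
      have hABi : ((A ∩ B).card : ℝ) < t := hcon x y
      have e1 : ((A \ B).card : ℝ) + ((A ∩ B).card : ℝ) = (A.card : ℝ) := by
        exact_mod_cast Finset.card_sdiff_add_card_inter A B
      have e2 : ((B \ A).card : ℝ) + ((A ∩ B).card : ℝ) = (B.card : ℝ) := by
        rw [Finset.inter_comm]
        exact_mod_cast Finset.card_sdiff_add_card_inter B A
      have h4t : 4 * t = ε * ((N : ℝ) - 1) := by rw [htdef]; ring
      have h1 : ((A \ B).card : ℝ) * ((B \ A).card : ℝ)
          ≤ ((A \ B).card : ℝ) * t + ((B \ A).card : ℝ) * t := by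
        have : ((Pr.card + Pb.card : ℕ) : ℝ) = ((A \ B).card : ℝ) * ((B \ A).card : ℝ) := by
          exact_mod_cast congrArg Nat.cast hsplit
        push_cast at this
        linarith [hPrcard, hPbcard]
      have ha3 : 3 * t ≤ ((A \ B).card : ℝ) := by
        rw [hA] at *; linarith [hx]
      have hb3 : 3 * t ≤ ((B \ A).card : ℝ) := by
        rw [hB] at *; linarith [hy]
      nlinarith [mul_nonneg (sub_nonneg.2 ha3) (sub_nonneg.2 hb3),
        mul_le_mul_of_nonneg_left ha3 ht.le, mul_le_mul_of_nonneg_left hb3 ht.le,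
        mul_pos ht ht]
    obtain ⟨p, q, hpq⟩ := main
    have hkeyR : t + 1 ≤ (R : ℝ) := by
      have h1 : ((colorNbr col true p ∩ colorNbr col false q).card : ℝ) + 1 ≤ (R : ℝ) := by
        exact_mod_cast key p q
      linarith
    have hfrac : (4 / ε) * t = (N : ℝ) - 1 := by
      rw [htdef]; field_simp
    have hmul : (4 / ε) * (t + 1) ≤ (4 / ε) * (R : ℝ) :=
      mul_le_mul_of_nonneg_left hkeyR (by positivity)
    have hcastn : ((ramsey G : ℕ) : ℝ) = (N : ℝ) + 1 := by
      have : ramsey G = N + 1 := by omega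
      exact_mod_cast this
    rw [hcastn]
    have hexp : (4 / ε) * (t + 1) = ((N : ℝ) - 1) + 4 / ε := by
      rw [mul_add, hfrac, mul_one]
    linarith
end

section
/- Let 0 < ε ≤ 1/2 and suppose a red/blue coloring of E(K_N) has exactly ε·binom(N,2) red edges and every vertex has red degree at most (3/2)·ε·(N−1). Then the number of two-edge paths with one red and one blue edge is at least (ε/4)·N·(N−1)². -/
open Finset

section Aux
open Classical in
/-- Handshake: sum of red degrees equals twice the red edge count. -/
lemma handshake (N : ℕ) (col : Sym2 (Fin N) → Bool) :
    ∑ u : Fin N, (colorNbr col true u).card = 2 * colorEdgeCount col true := by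
  classical
  let G : SimpleGraph (Fin N) :=
    { Adj := fun u v => u ≠ v ∧ col s(u, v) = true
      symm := by
        constructor
        rintro u v ⟨h1, h2⟩
        exact ⟨h1.symm, by rwa [Sym2.eq_swap]⟩
      loopless := by constructor; rintro u ⟨h, -⟩; exact h rfl }
  have hnbr : ∀ v, colorNbr col true v = G.neighborFinset v := by
    intro v
    ext u
    simp only [colorNbr, G, Finset.mem_filter, Finset.mem_univ, true_and,
      SimpleGraph.mem_neighborFinset]
    constructor
    · rintro ⟨h1, h2⟩; exact ⟨h1.symm, h2⟩
    · rintro ⟨h1, h2⟩; exact ⟨h1.symm, h2⟩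
  have hedge : colorEdgeCount col true = G.edgeFinset.card := by
    have hset : {e : Sym2 (Fin N) | ¬ e.IsDiag ∧ col e = true} = G.edgeSet := by
      ext e
      induction e using Sym2.inductionOn with
      | hf a b =>
        simp [SimpleGraph.mem_edgeSet, G, Sym2.isDiag_iff_proj_eq, and_comm]
    rw [colorEdgeCount, hset, ← G.coe_edgeFinset, Set.ncard_coe_finset]
  simp only [hnbr, hedge]
  have := G.sum_degrees_eq_twice_card_edges
  simp only [SimpleGraph.degree] at this
  exact this
end Aux

theorem cherry_lower_bound (N : ℕ) (ε : ℝ) (hε0 : 0 < ε) (hε : ε ≤ 1 / 2)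
    (col : Sym2 (Fin N) → Bool)
    (hred : (colorEdgeCount col true : ℝ) = ε * (N.choose 2))
    (hdeg : ∀ u : Fin N, ((colorNbr col true u).card : ℝ) ≤ (3 / 2) * ε * ((N : ℝ) - 1)) :
    (ε / 4) * N * ((N : ℝ) - 1) ^ 2 ≤
      ∑ u : Fin N, ((colorNbr col true u).card : ℝ) *
        (((N : ℝ) - 1) - (colorNbr col true u).card) := by
  classical
  set d : Fin N → ℝ := fun u => ((colorNbr col true u).card : ℝ) with hd
  have hS : ∑ u : Fin N, d u = ε * N * ((N : ℝ) - 1) := by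
    have h1 : ((∑ u : Fin N, (colorNbr col true u).card : ℕ) : ℝ)
        = 2 * (colorEdgeCount col true : ℝ) := by
      rw [handshake]; push_cast; ring
    have h2 : ((N.choose 2 : ℕ) : ℝ) = N * ((N : ℝ) - 1) / 2 := by
      rw [Nat.cast_choose_two]
    rw [Nat.cast_sum] at h1
    calc ∑ u : Fin N, d u = 2 * (colorEdgeCount col true : ℝ) := h1
      _ = ε * N * ((N : ℝ) - 1) := by rw [hred, h2]; ring
  rcases Nat.eq_zero_or_pos N with hN0 | hNpos
  · subst hN0
    simp
  have hN1 : (1 : ℝ) ≤ N := by exact_mod_cast hNpos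
  have hQ : ∑ u : Fin N, d u ^ 2 ≤ (3 / 2) * ε * ((N : ℝ) - 1) * ∑ u : Fin N, d u := by
    rw [Finset.mul_sum]
    apply Finset.sum_le_sum
    intro u _
    have h1 := hdeg u
    have h2 : (0 : ℝ) ≤ d u := by positivity
    nlinarith
  have hexp : ∑ u : Fin N, d u * (((N : ℝ) - 1) - d u)
      = ((N : ℝ) - 1) * (∑ u : Fin N, d u) - ∑ u : Fin N, d u ^ 2 := by
    rw [Finset.mul_sum, ← Finset.sum_sub_distrib]
    congr 1; ext u; ring
  rw [hexp, hS]
  rw [hS] at hQ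
  have hNnn : (0 : ℝ) ≤ (N : ℝ) := by positivity
  have hhalf : (0 : ℝ) ≤ 1 / 2 - ε := by linarith
  have key : 0 ≤ ε * N * ((N : ℝ) - 1) ^ 2 * (1 / 2 - ε) :=
    mul_nonneg (mul_nonneg (mul_nonneg hε0.le hNnn) (sq_nonneg _)) hhalf
  linarith [hQ, key]
end

section
/- For any fixed ε ∈ (0, 1/2], there exist graphs G that are not ε-Ramsey-balanced: that is, every two-coloring of E(K_{r(G)−1}) with no monochromatic copy of G has some color class of edge density less than ε, provided r(G)/r(G\{v}) > 4/ε for some vertex v. -/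
open Finset

section aux

variable {N : ℕ} (col : Sym2 (Fin N) → Bool)

lemma mem_colorNbr_comm {c : Bool} {x u : Fin N} :
    x ∈ colorNbr col c u ↔ u ∈ colorNbr col c x := by
  simp only [colorNbr, Finset.mem_filter, Finset.mem_univ, true_and]
  constructor <;> rintro ⟨h1, h2⟩ <;> exact ⟨h1.symm, by rwa [Sym2.eq_swap]⟩

def colorGraph (c : Bool) : SimpleGraph (Fin N) where
  Adj x y := x ≠ y ∧ col s(x, y) = c
  symm := ⟨by rintro x y ⟨h1, h2⟩; exact ⟨h1.symm, by rwa [Sym2.eq_swap]⟩⟩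
  loopless := ⟨by rintro x ⟨h, -⟩; exact h rfl⟩

instance (c : Bool) : DecidableRel (colorGraph col c).Adj := fun x y =>
  inferInstanceAs (Decidable (x ≠ y ∧ col s(x, y) = c))

lemma colorNbr_eq_neighborFinset (c : Bool) (u : Fin N) :
    colorNbr col c u = (colorGraph col c).neighborFinset u := by
  ext x
  simp only [colorNbr, Finset.mem_filter, Finset.mem_univ, true_and,
    SimpleGraph.mem_neighborFinset]
  show _ ↔ u ≠ x ∧ col s(u, x) = c
  constructor <;> rintro ⟨h1, h2⟩ <;> exact ⟨h1.symm, h2⟩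

lemma colorEdgeCount_eq_s18 (c : Bool) :
    colorEdgeCount col c = (colorGraph col c).edgeFinset.card := by
  have hset : (colorGraph col c).edgeSet = {e : Sym2 (Fin N) | ¬ e.IsDiag ∧ col e = c} := by
    ext e
    induction e using Sym2.ind with
    | _ x y =>
      simp only [SimpleGraph.mem_edgeSet, Set.mem_setOf_eq, Sym2.isDiag_iff_proj_eq]
      exact Iff.rfl
  rw [colorEdgeCount, ← hset, ← Nat.card_coe_set_eq, Nat.card_eq_fintype_card,
    SimpleGraph.edgeFinset_card]

lemma sum_colorNbr_card (c : Bool) :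
    ∑ u : Fin N, (colorNbr col c u).card = 2 * colorEdgeCount col c := by
  rw [colorEdgeCount_eq_s18]
  rw [← SimpleGraph.sum_degrees_eq_twice_card_edges]
  exact Finset.sum_congr rfl fun u _ => by
    rw [colorNbr_eq_neighborFinset]; rfl

lemma colorEdgeCount_add :
    colorEdgeCount col true + colorEdgeCount col false = N.choose 2 := by
  classical
  have hdisj : Disjoint {e : Sym2 (Fin N) | ¬ e.IsDiag ∧ col e = true}
      {e : Sym2 (Fin N) | ¬ e.IsDiag ∧ col e = false} := by
    rw [Set.disjoint_left]
    rintro e ⟨-, h1⟩ ⟨-, h2⟩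
    rw [h1] at h2; exact Bool.noConfusion h2
  have hunion : {e : Sym2 (Fin N) | ¬ e.IsDiag ∧ col e = true} ∪
      {e : Sym2 (Fin N) | ¬ e.IsDiag ∧ col e = false} = {e : Sym2 (Fin N) | ¬ e.IsDiag} := by
    ext e
    simp only [Set.mem_union, Set.mem_setOf_eq]
    cases h : col e <;> tauto
  have := Set.ncard_union_eq hdisj (Set.toFinite _) (Set.toFinite _)
  rw [hunion] at this
  rw [colorEdgeCount, colorEdgeCount, ← this, ← Nat.card_coe_set_eq,
    Nat.card_eq_fintype_card]
  have h2 : Fintype.card {e : Sym2 (Fin N) // ¬ e.IsDiag} = N.choose 2 := by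
    rw [Sym2.card_subtype_not_diag, Fintype.card_fin]
  convert h2 using 2
  rfl

lemma colorNbr_card_add (u : Fin N) :
    (colorNbr col true u).card + (colorNbr col false u).card + 1 = N := by
  classical
  have hdisj : Disjoint (colorNbr col true u) (colorNbr col false u) := by
    rw [Finset.disjoint_left]
    rintro x hx hx'
    simp only [colorNbr, Finset.mem_filter] at hx hx'
    rw [hx.2.2] at hx'; exact Bool.noConfusion hx'.2.2
  have hunion : colorNbr col true u ∪ colorNbr col false u = Finset.univ.erase u := by
    ext x
    simp only [colorNbr, Finset.mem_union, Finset.mem_filter, Finset.mem_univ, true_and,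
      Finset.mem_erase, and_true]
    cases h : col s(u, x) <;> tauto
  have := Finset.card_union_of_disjoint hdisj
  rw [hunion, Finset.card_erase_of_mem (Finset.mem_univ u), Finset.card_univ,
    Fintype.card_fin] at this
  have hN : 0 < N := u.pos
  omega

end aux

section aux2

lemma mono_restrict {V : Type*} {N : ℕ} (G : SimpleGraph V) (v : V)
    (col : Sym2 (Fin N) → Bool) (c : Bool) (h : HasMonoCopy G col c) :
    HasMonoCopy (G.induce {u | u ≠ v}) col c := by
  obtain ⟨f, finj, fm⟩ := h
  exact ⟨fun x => f x, finj.comp Subtype.val_injective,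
    fun a b hadj => fm a b hadj⟩

lemma extend_mono {V : Type*} {N : ℕ} (G : SimpleGraph V) (v : V)
    (col : Sym2 (Fin N) → Bool) (c : Bool) (z : Fin N)
    (f : {u : V | u ≠ v} → Fin N) (hinj : Function.Injective f)
    (hmem : ∀ x, f x ∈ colorNbr col c z)
    (hmono : ∀ a b, (G.induce {u | u ≠ v}).Adj a b → col s(f a, f b) = c) :
    HasMonoCopy G col c := by
  classical
  have hne : ∀ x, f x ≠ z := by
    intro x
    have := hmem x
    simp only [colorNbr, Finset.mem_filter] at this
    exact this.2.1
  have hcol : ∀ x, col s(z, f x) = c := by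
    intro x
    have := hmem x
    simp only [colorNbr, Finset.mem_filter] at this
    exact this.2.2
  refine ⟨fun x => if h : x = v then z else f ⟨x, h⟩, ?_, ?_⟩
  · intro x y hxy
    dsimp only at hxy
    by_cases hx : x = v <;> by_cases hy : y = v
    · rw [hx, hy]
    · rw [dif_pos hx, dif_neg hy] at hxy
      exact absurd hxy.symm (hne ⟨y, hy⟩)
    · rw [dif_neg hx, dif_pos hy] at hxy
      exact absurd hxy (hne ⟨x, hx⟩)
    · rw [dif_neg hx, dif_neg hy] at hxy
      have := hinj hxy
      exact congrArg Subtype.val (by exact this)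
  · intro a b hab
    dsimp only
    by_cases ha : a = v <;> by_cases hb : b = v
    · subst ha; subst hb; exact absurd hab (G.irrefl)
    · simp only [dif_pos ha, dif_neg hb]
      exact hcol ⟨b, hb⟩
    · simp only [dif_neg ha, dif_pos hb]
      rw [Sym2.eq_swap]
      exact hcol ⟨a, ha⟩
    · simp only [dif_neg ha, dif_neg hb]
      exact hmono ⟨a, ha⟩ ⟨b, hb⟩ hab

lemma claimB {V : Type*} {N m : ℕ} (G : SimpleGraph V) (v : V)
    (col : Sym2 (Fin N) → Bool)
    (hm : ∀ col' : Sym2 (Fin m) → Bool, ∃ c, HasMonoCopy (G.induce {u | u ≠ v}) col' c)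
    (hno : ∀ c, ¬ HasMonoCopy G col c) (c : Bool) (z w : Fin N) :
    (colorNbr col c z ∩ colorNbr col (!c) w).card < m := by
  classical
  by_contra hcard
  push_neg at hcard
  obtain ⟨A, hA, hAcard⟩ := Finset.exists_subset_card_eq hcard
  let e := A.equivFinOfCardEq hAcard
  set g : Fin m → Fin N := fun i => (e.symm i : Fin N) with hg
  have hginj : Function.Injective g := by
    intro i j hij
    exact e.symm.injective (Subtype.val_injective hij)
  have hgmem : ∀ i, g i ∈ A := fun i => (e.symm i).2
  obtain ⟨c₀, f, finj, fmono⟩ := hm (fun e' => col (e'.map g))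
  refine hno c₀ ?_
  have hz' : ∀ i : Fin m, g i ∈ colorNbr col c₀ (if c₀ = c then z else w) := by
    intro i
    have := hA (hgmem i)
    rw [Finset.mem_inter] at this
    by_cases h : c₀ = c
    · rw [if_pos h, h]; exact this.1
    · rw [if_neg h]
      have : g i ∈ colorNbr col (!c) w := this.2
      have hb : c₀ = !c := by cases c₀ <;> cases c <;> simp_all
      rwa [hb]
  apply extend_mono G v col c₀ (if c₀ = c then z else w) (fun x => g (f x))
    (hginj.comp finj) (fun x => hz' (f x))
  intro a b hab
  have := fmono a b hab
  dsimp only at this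
  rwa [Sym2.map_pair_eq] at this

end aux2

section aux3

variable {N : ℕ} (col : Sym2 (Fin N) → Bool)

lemma sum_over_nbr (c : Bool) (F : Fin N → ℕ) :
    ∑ x : Fin N, (colorNbr col c x).card * F x =
      ∑ u : Fin N, ∑ x ∈ colorNbr col c u, F x := by
  classical
  have step : ∀ u : Fin N, ∑ x ∈ colorNbr col c u, F x
      = ∑ x : Fin N, if x ∈ colorNbr col c u then F x else 0 := by
    intro u
    rw [Finset.sum_ite_mem, Finset.univ_inter]
  simp_rw [step]
  rw [Finset.sum_comm]
  refine Finset.sum_congr rfl fun x _ => ?_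
  have : ∀ u : Fin N, (if x ∈ colorNbr col c u then F x else 0)
      = (if u ∈ colorNbr col c x then F x else 0) := by
    intro u
    exact if_congr (mem_colorNbr_comm col) rfl rfl
  simp_rw [this]
  rw [Finset.sum_ite_mem, Finset.univ_inter, Finset.sum_const, smul_eq_mul]

lemma sum_nbr_card_over (c : Bool) (S : Finset (Fin N)) :
    ∑ x ∈ S, (colorNbr col c x).card = ∑ w : Fin N, (S ∩ colorNbr col c w).card := by
  classical
  have step : ∀ x : Fin N, (colorNbr col c x).card
      = ∑ w : Fin N, if w ∈ colorNbr col c x then 1 else 0 := by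
    intro x
    rw [Finset.sum_ite_mem, Finset.univ_inter, Finset.card_eq_sum_ones]
  simp_rw [step]
  rw [Finset.sum_comm]
  refine Finset.sum_congr rfl fun w _ => ?_
  have : ∀ x : Fin N, (if w ∈ colorNbr col c x then (1:ℕ) else 0)
      = (if x ∈ colorNbr col c w then 1 else 0) := by
    intro x
    exact if_congr (mem_colorNbr_comm col) rfl rfl
  simp_rw [this]
  rw [Finset.sum_ite_mem, Finset.card_eq_sum_ones (S ∩ colorNbr col c w)]

end aux3

set_option maxHeartbeats 2000000 in
lemma key_count {V : Type*} (ε : ℝ) (hε0 : 0 < ε) (hε : ε ≤ 1 / 2)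
    (G : SimpleGraph V) (v : V) {N m : ℕ} (hm1 : 1 ≤ m)
    (hmono_m : ∀ col' : Sym2 (Fin m) → Bool, ∃ c,
      HasMonoCopy (G.induce {u | u ≠ v}) col' c)
    (hN8 : 8 ≤ N) (hgap' : 4 * (m:ℝ) < ε * ((N:ℝ) + 1))
    (col : Sym2 (Fin N) → Bool) (hno : ∀ c : Bool, ¬ HasMonoCopy G col c) :
    ∃ c : Bool, (colorEdgeCount col c : ℝ) < ε * (N.choose 2) := by
  classical
  by_contra hcon
  push_neg at hcon
  have hm1' : (1:ℝ) ≤ m := by exact_mod_cast hm1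
  have hB : ∀ (c : Bool) (z w : Fin N), (colorNbr col c z ∩ colorNbr col (!c) w).card < m :=
    fun c z w => claimB G v col hmono_m hno c z w
  have hsumE := colorEdgeCount_add col
  obtain ⟨b, hbmin⟩ : ∃ b : Bool, colorEdgeCount col b ≤ colorEdgeCount col (!b) := by
    rcases le_total (colorEdgeCount col true) (colorEdgeCount col false) with h | h
    · exact ⟨true, by simpa using h⟩
    · exact ⟨false, by simpa using h⟩
  have hEb2 : 2 * colorEdgeCount col b ≤ N.choose 2 := by
    cases b
    · simp only [Bool.not_false] at hbmin; omega
    · simp only [Bool.not_true] at hbmin; omega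
  have hNpos : 0 < N := by omega
  have huniv : (Finset.univ : Finset (Fin N)).Nonempty := by
    rw [Finset.univ_nonempty_iff]
    exact Fin.pos_iff_nonempty.mp hNpos
  obtain ⟨w0, -, hw0⟩ := Finset.exists_max_image Finset.univ
    (fun u => (colorNbr col b u).card) huniv
  have hstep5 : ∀ u : Fin N, (colorNbr col b w0).card ≤ m + (colorNbr col b u).card := by
    intro u
    have hsub : colorNbr col b w0 ⊆
        insert u ((colorNbr col (!b) u ∩ colorNbr col b w0) ∪ colorNbr col b u) := by
      intro x hx
      rw [Finset.mem_insert]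
      by_cases hxu : x = u
      · exact Or.inl hxu
      · right
        rw [Finset.mem_union]
        by_cases hc : col s(u, x) = b
        · right
          simp only [colorNbr, Finset.mem_filter, Finset.mem_univ, true_and]
          exact ⟨hxu, hc⟩
        · left
          rw [Finset.mem_inter]
          refine ⟨?_, hx⟩
          simp only [colorNbr, Finset.mem_filter, Finset.mem_univ, true_and]
          refine ⟨hxu, ?_⟩
          cases hcb : col s(u, x) <;> cases hbb : b <;> simp_all
    have h1 := Finset.card_le_card hsub
    have h2 := Finset.card_insert_le u
      ((colorNbr col (!b) u ∩ colorNbr col b w0) ∪ colorNbr col b u)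
    have h3 := Finset.card_union_le (colorNbr col (!b) u ∩ colorNbr col b w0)
      (colorNbr col b u)
    have h4 : (colorNbr col (!b) u ∩ colorNbr col b w0).card < m := by
      have := hB (!b) u w0
      rwa [Bool.not_not] at this
    omega
  have hhs : ∀ c, ∑ u : Fin N, (colorNbr col c u).card = 2 * colorEdgeCount col c :=
    fun c => sum_colorNbr_card col c
  have hpart : ∀ u : Fin N, (colorNbr col b u).card + (colorNbr col (!b) u).card + 1 = N := by
    intro u
    have h := colorNbr_card_add col u
    cases b
    · simp only [Bool.not_false]; omega
    · simp only [Bool.not_true]; omega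
  have hsum_ub : 2 * colorEdgeCount col b ≤ N * (colorNbr col b w0).card := by
    rw [← hhs b]
    calc ∑ u : Fin N, (colorNbr col b u).card
        ≤ ∑ _u : Fin N, (colorNbr col b w0).card :=
          Finset.sum_le_sum fun u _ => hw0 u (Finset.mem_univ u)
      _ = N * (colorNbr col b w0).card := by
          rw [Finset.sum_const, Finset.card_univ, Fintype.card_fin, smul_eq_mul]
  have hsum_lb : N * (colorNbr col b w0).card ≤ N * m + 2 * colorEdgeCount col b := by
    rw [← hhs b]
    calc N * (colorNbr col b w0).card = ∑ _u : Fin N, (colorNbr col b w0).card := by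
          rw [Finset.sum_const, Finset.card_univ, Fintype.card_fin, smul_eq_mul]
      _ ≤ ∑ u : Fin N, (m + (colorNbr col b u).card) :=
          Finset.sum_le_sum fun u _ => hstep5 u
      _ = N * m + ∑ u : Fin N, (colorNbr col b u).card := by
          rw [Finset.sum_add_distrib, Finset.sum_const, Finset.card_univ, Fintype.card_fin,
            smul_eq_mul]
  have hC2ub : ∑ x : Fin N, (colorNbr col b x).card * (colorNbr col (!b) x).card
      ≤ N * (N * (m - 1)) := by
    rw [sum_over_nbr col b (fun x => (colorNbr col (!b) x).card)]
    calc ∑ u : Fin N, ∑ x ∈ colorNbr col b u, (colorNbr col (!b) x).card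
        ≤ ∑ _u : Fin N, N * (m-1) := by
          refine Finset.sum_le_sum fun u _ => ?_
          rw [sum_nbr_card_over col (!b) (colorNbr col b u)]
          calc ∑ w : Fin N, ((colorNbr col b u) ∩ colorNbr col (!b) w).card
              ≤ ∑ _w : Fin N, (m-1) :=
                Finset.sum_le_sum fun w _ => Nat.le_sub_one_of_lt (hB b u w)
            _ = N * (m-1) := by
                rw [Finset.sum_const, Finset.card_univ, Fintype.card_fin, smul_eq_mul]
      _ = N * (N * (m-1)) := by
          rw [Finset.sum_const, Finset.card_univ, Fintype.card_fin, smul_eq_mul]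
  -- pass to the reals
  have hch : ((N.choose 2 : ℕ) : ℝ) = (N:ℝ) * ((N:ℝ)-1) / 2 := Nat.cast_choose_two (K := ℝ) N
  have hr1 : ε * ((N:ℝ) * ((N:ℝ)-1)/2) ≤ (colorEdgeCount col b : ℝ) := by
    have h := hcon b
    rwa [hch] at h
  have hr2 : 2 * (colorEdgeCount col b : ℝ) ≤ (N:ℝ) * ((N:ℝ)-1)/2 := by
    have h := (Nat.cast_le (α := ℝ)).mpr hEb2
    push_cast at h
    rw [hch] at h
    linarith
  have hr3 : (N:ℝ) * ((colorNbr col b w0).card : ℝ)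
      ≤ (N:ℝ) * (m:ℝ) + 2 * (colorEdgeCount col b : ℝ) := by exact_mod_cast hsum_lb
  have hr4 : 2 * (colorEdgeCount col b : ℝ) ≤ (N:ℝ) * ((colorNbr col b w0).card : ℝ) := by
    exact_mod_cast hsum_ub
  have hsc : (∑ x : Fin N, ((colorNbr col b x).card:ℝ)) = 2 * (colorEdgeCount col b : ℝ) := by
    exact_mod_cast hhs b
  have hr5 : 2 * (colorEdgeCount col b : ℝ) * ((N:ℝ) - 1 - ((colorNbr col b w0).card : ℝ)) ≤
      ∑ x : Fin N, ((colorNbr col b x).card : ℝ) * ((colorNbr col (!b) x).card : ℝ) := by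
    have hterm : ∀ x : Fin N,
        ((colorNbr col b x).card : ℝ) * ((N:ℝ) - 1 - ((colorNbr col b w0).card : ℝ))
        ≤ ((colorNbr col b x).card : ℝ) * ((colorNbr col (!b) x).card : ℝ) := by
      intro x
      apply mul_le_mul_of_nonneg_left _ (Nat.cast_nonneg _)
      have h1' : ((colorNbr col b x).card:ℝ) ≤ ((colorNbr col b w0).card:ℝ) := by
        exact_mod_cast hw0 x (Finset.mem_univ x)
      have h2' : ((colorNbr col b x).card:ℝ) + ((colorNbr col (!b) x).card:ℝ) + 1 = (N:ℝ) := by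
        exact_mod_cast hpart x
      linarith
    calc 2 * (colorEdgeCount col b : ℝ) * ((N:ℝ) - 1 - ((colorNbr col b w0).card : ℝ))
        = (∑ x : Fin N, ((colorNbr col b x).card:ℝ))
            * ((N:ℝ) - 1 - ((colorNbr col b w0).card : ℝ)) := by rw [hsc]
      _ = ∑ x : Fin N, ((colorNbr col b x).card:ℝ)
            * ((N:ℝ) - 1 - ((colorNbr col b w0).card : ℝ)) := by rw [Finset.sum_mul]
      _ ≤ _ := Finset.sum_le_sum fun x _ => hterm x
  have hr6 : ∑ x : Fin N, ((colorNbr col b x).card : ℝ) * ((colorNbr col (!b) x).card : ℝ)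
      ≤ (N:ℝ) * ((N:ℝ) * ((m:ℝ) - 1)) := by
    have h := (Nat.cast_le (α := ℝ)).mpr hC2ub
    push_cast [Nat.cast_sub hm1] at h
    exact h
  -- final contradiction, all real arithmetic
  set n : ℝ := (N:ℝ) with hnr
  set M : ℝ := (m:ℝ) with hMr
  set t : ℝ := ((colorNbr col b w0).card : ℝ) with htr
  set eb : ℝ := (colorEdgeCount col b : ℝ) with hebr
  have hn8 : (8:ℝ) ≤ n := by rw [hnr]; exact_mod_cast hN8
  have hn0 : (0:ℝ) < n := by linarith
  have ht0 : (0:ℝ) ≤ t := Nat.cast_nonneg _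
  have heb0 : (0:ℝ) ≤ eb := Nat.cast_nonneg _
  have h_t : t ≤ M + (n-1)/2 := by nlinarith [hr3, hr2, hn0]
  have hM8 : M < (n+1)/8 := by nlinarith [hgap', hε, hn0]
  have hhalf : (0:ℝ) ≤ (n-1)/2 - M := by linarith
  have ht' : (n-1)/2 - M ≤ n - 1 - t := by linarith
  have hkey : ε * n * (n-1) * ((n-1)/2 - M) ≤ n * (n * (M-1)) := by
    have h5' : 2*eb*((n-1)/2 - M) ≤ 2*eb*(n-1-t) :=
      mul_le_mul_of_nonneg_left ht' (by linarith)
    have h1' : ε * (n*(n-1)/2) * ((n-1)/2 - M) ≤ eb * ((n-1)/2 - M) :=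
      mul_le_mul_of_nonneg_right hr1 hhalf
    calc ε*n*(n-1)*((n-1)/2-M) = 2*(ε*(n*(n-1)/2))*((n-1)/2-M) := by ring
      _ ≤ 2*eb*((n-1)/2-M) := by linarith
      _ ≤ 2*eb*(n-1-t) := h5'
      _ ≤ ∑ x : Fin N, ((colorNbr col b x).card : ℝ) * ((colorNbr col (!b) x).card : ℝ) := hr5
      _ ≤ n*(n*(M-1)) := hr6
  have hstep1 : n * (n * (M-1)) < n * (n * (ε*(n+1)/4 - 1)) := by
    have h : M - 1 < ε*(n+1)/4 - 1 := by linarith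
    nlinarith [hn0, h]
  have hstep2 : ε*n*(n-1)*((n-1)/2 - ε*(n+1)/4) ≤ ε*n*(n-1)*((n-1)/2 - M) := by
    have h1 : (0:ℝ) ≤ ε*n*(n-1) := by
      apply mul_nonneg (mul_nonneg hε0.le hn0.le)
      linarith
    nlinarith [h1, hgap']
  have hfin : ε*n*(n-1)*((n-1)/2 - ε*(n+1)/4) < n * (n * (ε*(n+1)/4 - 1)) := by
    calc ε*n*(n-1)*((n-1)/2 - ε*(n+1)/4) ≤ ε*n*(n-1)*((n-1)/2 - M) := hstep2
      _ ≤ n*(n*(M-1)) := hkey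
      _ < _ := hstep1
  have hε2 : ε*ε ≤ ε/2 := by nlinarith [hε0, hε]
  nlinarith [hfin, hε0.le, hε, hn8, hn0, hε2, sq_nonneg (n-10), sq_nonneg (n-8),
    mul_nonneg hε0.le hn0.le, mul_nonneg (mul_nonneg hε0.le hn0.le) hn0.le]

theorem not_ramsey_balanced {V : Type*} [Fintype V] [Nontrivial V] (ε : ℝ) (hε0 : 0 < ε)
    (hε : ε ≤ 1 / 2) (G : SimpleGraph V) (v : V)
    (hgap : (4 / ε) * ramsey (G.induce {u | u ≠ v}) < (ramsey G : ℝ)) :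
    ∀ col : Sym2 (Fin (ramsey G - 1)) → Bool, (∀ c : Bool, ¬ HasMonoCopy G col c) →
      ∃ c : Bool, (colorEdgeCount col c : ℝ) < ε * ((ramsey G - 1).choose 2) := by
  classical
  intro col hno
  have hmR : (0:ℝ) ≤ (4/ε) * ramsey (G.induce {u | u ≠ v}) := by positivity
  have hrG1 : 1 ≤ ramsey G := by
    by_contra h
    push_neg at h
    have h0 : ramsey G = 0 := by omega
    rw [h0] at hgap
    simp only [Nat.cast_zero] at hgap
    linarith
  have hSG : {n : ℕ | ∀ col' : Sym2 (Fin n) → Bool, ∃ c, HasMonoCopy G col' c}.Nonempty := by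
    by_contra h
    rw [Set.not_nonempty_iff_eq_empty] at h
    have : ramsey G = 0 := by rw [ramsey, h, Nat.sInf_empty]
    omega
  have hSH : {n : ℕ | ∀ col' : Sym2 (Fin n) → Bool, ∃ c,
      HasMonoCopy (G.induce {u | u ≠ v}) col' c}.Nonempty := by
    obtain ⟨n, hn⟩ := hSG
    exact ⟨n, fun col' => (hn col').imp fun c hc => mono_restrict G v col' c hc⟩
  have hmono_m : ∀ col' : Sym2 (Fin (ramsey (G.induce {u | u ≠ v}))) → Bool, ∃ c,
      HasMonoCopy (G.induce {u | u ≠ v}) col' c := Nat.sInf_mem hSH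
  have hm1 : 1 ≤ ramsey (G.induce {u | u ≠ v}) := by
    rcases Nat.eq_zero_or_pos (ramsey (G.induce {u | u ≠ v})) with h0 | h
    swap
    · exact h
    exfalso
    obtain ⟨c₀, f, -, -⟩ := hmono_m (fun _ => true)
    obtain ⟨u, hu⟩ := exists_ne v
    have hf := f ⟨u, hu⟩
    rw [h0] at hf
    exact hf.elim0
  have hm1' : (1:ℝ) ≤ (ramsey (G.induce {u | u ≠ v}) : ℝ) := by exact_mod_cast hm1
  have hcast : ((ramsey G - 1 : ℕ):ℝ) + 1 = ramsey G := by
    rw [Nat.cast_sub hrG1]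
    push_cast
    ring
  have h4ε : (8:ℝ) ≤ 4 / ε := by
    rw [le_div_iff₀ hε0]; linarith
  have hgap' : 4 * (ramsey (G.induce {u | u ≠ v}) : ℝ) < ε * (((ramsey G - 1 : ℕ):ℝ) + 1) := by
    rw [hcast]
    have h2 := mul_lt_mul_of_pos_left hgap hε0
    calc 4 * (ramsey (G.induce {u | u ≠ v}) : ℝ)
        = ε * ((4/ε) * ramsey (G.induce {u | u ≠ v})) := by field_simp
      _ < ε * ramsey G := h2
  have hN8 : 8 ≤ ramsey G - 1 := by
    have h1 : (8:ℝ) * (ramsey (G.induce {u | u ≠ v}) : ℝ)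
        ≤ (4/ε) * (ramsey (G.induce {u | u ≠ v}) : ℝ) :=
      mul_le_mul_of_nonneg_right h4ε (by positivity)
    have h2 : (8:ℝ) < ((ramsey G - 1 : ℕ):ℝ) + 1 := by
      calc (8:ℝ) ≤ 8 * (ramsey (G.induce {u | u ≠ v}) : ℝ) := by linarith
        _ ≤ (4/ε) * (ramsey (G.induce {u | u ≠ v}) : ℝ) := h1
        _ < ramsey G := hgap
        _ = ((ramsey G - 1 : ℕ):ℝ) + 1 := hcast.symm
    have h3 : (7:ℝ) < ((ramsey G - 1 : ℕ):ℝ) := by linarith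
    have h4 : (7:ℕ) < ramsey G - 1 := by exact_mod_cast h3
    omega
  exact key_count ε hε0 hε G v hm1 hmono_m hN8 hgap' col hno
end
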